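/- Every resolvent of a simply-moded query Q and a simply-moded clause c, where the derivation step is input-consuming and Var(Q) ∩ Var(c) = ∅, is simply-moded. -/

import Mathlib

/- ## First-order terms -/

inductive Trm (F : Type) : Type
  | var : ℕ → Trm F
  | fn : F → List (Trm F) → Trm F

/-- A substitution: a mapping from variables to terms. -/
abbrev Subst (F : Type) := ℕ → Trm F

namespace Trm
variable {F : Type}

/-- Application of a substitution to a term. -/
def subst (σ : Subst F) : Trm F → Trm F
  | .var x => σ x
  | .fn f ts => .fn f (ts.attach.map (fun t => t.1.subst σ))
decreasing_by simp_wf; have := List.sizeOf_lt_of_mem t.2; omega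

/-- The set of variables occurring in a term. -/
def vars : Trm F → Set ℕ
  | .var x => {x}
  | .fn _ ts => (ts.attach.map (fun t => t.1.vars)).foldr (· ∪ ·) ∅
decreasing_by simp_wf; have := List.sizeOf_lt_of_mem t.2; omega

/-- The number of occurrences of a variable in a term. -/
def varCount (x : ℕ) : Trm F → ℕ
  | .var y => if y = x then 1 else 0
  | .fn _ ts => (ts.attach.map (fun t => t.1.varCount x)).sum
decreasing_by simp_wf; have := List.sizeOf_lt_of_mem t.2; omega

/-- The subterm relation. -/
inductive IsSubterm : Trm F → Trm F → Prop
  | refl (t : Trm F) : IsSubterm t t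
  | fn {s t : Trm F} {f : F} {ts : List (Trm F)} : t ∈ ts → IsSubterm s t → IsSubterm s (.fn f ts)

end Trm

/- ## Sequences of terms -/

/-- Application of a substitution to a sequence of terms. -/
def substList {F : Type} (σ : Subst F) (ts : List (Trm F)) : List (Trm F) :=
  ts.map (Trm.subst σ)

/-- The set of variables occurring in a sequence of terms. -/
def varsList {F : Type} (ts : List (Trm F)) : Set ℕ := ⋃ t ∈ ts, t.vars

/-- The number of occurrences of a variable in a sequence of terms. -/
def varCountList {F : Type} (x : ℕ) (ts : List (Trm F)) : ℕ :=
  (ts.map (Trm.varCount x)).sum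

/-- A sequence of terms is linear if every variable occurs at most once in it. -/
def LinearList {F : Type} (ts : List (Trm F)) : Prop :=
  ∀ x : ℕ, varCountList x ts ≤ 1

/-- A term occurs in a sequence of terms if it is a subterm of one of its components. -/
def OccursInList {F : Type} (s : Trm F) (ts : List (Trm F)) : Prop :=
  ∃ t ∈ ts, Trm.IsSubterm s t

namespace Subst
variable {F : Type}

/-- The identity (empty) substitution. -/
def id : Subst F := Trm.var

/-- Composition of substitutions: `(comp σ τ)` applies `σ` first, then `τ`. -/
def comp (σ τ : Subst F) : Subst F := fun x => (σ x).subst τ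

/-- The domain of a substitution. -/
def dom (σ : Subst F) : Set ℕ := {x | σ x ≠ Trm.var x}

/-- A substitution has finite domain. -/
def FiniteDom (σ : Subst F) : Prop := σ.dom.Finite

/-- The set of variables of a substitution: its domain together with the
variables occurring in the images of domain variables. -/
def vars (σ : Subst F) : Set ℕ := σ.dom ∪ ⋃ x ∈ σ.dom, (σ x).vars

/-- A renaming: a substitution given by a permutation of the variables. -/
def IsRenaming (σ : Subst F) : Prop := ∃ e : ℕ ≃ ℕ, σ = fun x => Trm.var (e x)

end Subst

/-- `θ` is a unifier of the sequences of terms `z` and `w`. -/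
def IsUnifierList {F : Type} (θ : Subst F) (z w : List (Trm F)) : Prop :=
  substList θ z = substList θ w

/-- `θ` is a most general unifier (mgu) of the sequences of terms `z` and `w`. -/
def IsMguList {F : Type} (θ : Subst F) (z w : List (Trm F)) : Prop :=
  IsUnifierList θ z w ∧ ∀ σ : Subst F, IsUnifierList σ z w → ∃ γ : Subst F, Subst.comp θ γ = σ

/- ## Atoms, queries, clauses, programs (in presence of a fixed mode) -/

/-- An atom `p(s,t)`, where `s` is the sequence of terms filling in the input
positions and `t` the sequence of terms filling in the output positions
(as determined by the fixed mode of `p`). -/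
structure Atom (P F : Type) where
  rel : P
  inp : List (Trm F)
  out : List (Trm F)

namespace Atom
variable {P F : Type}

def subst (σ : Subst F) (A : Atom P F) : Atom P F :=
  ⟨A.rel, substList σ A.inp, substList σ A.out⟩

def vars (A : Atom P F) : Set ℕ := varsList A.inp ∪ varsList A.out

/-- `θ` is a unifier of two atoms. -/
def IsUnifier (θ : Subst F) (A B : Atom P F) : Prop := A.subst θ = B.subst θ

/-- `θ` is a most general unifier of two atoms. -/
def IsMgu (θ : Subst F) (A B : Atom P F) : Prop :=
  IsUnifier θ A B ∧ ∀ σ : Subst F, IsUnifier σ A B → ∃ γ : Subst F, Subst.comp θ γ = σ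

/-- An mgu of two atoms is relevant if its variables are among those of the two atoms. -/
def RelevantFor (θ : Subst F) (A B : Atom P F) : Prop :=
  Subst.vars θ ⊆ A.vars ∪ B.vars

end Atom

/-- A query: a finite sequence of atoms. -/
abbrev Query (P F : Type) := List (Atom P F)

/-- The set of variables of a query. -/
def queryVars {P F : Type} (Q : Query P F) : Set ℕ := ⋃ A ∈ Q, A.vars

/-- `In(Q)`: the sequence of terms filling in the input positions of `Q`. -/
def queryInp {P F : Type} (Q : Query P F) : List (Trm F) := Q.flatMap Atom.inp

/-- `Out(Q)`: the sequence of terms filling in the output positions of `Q`. -/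
def queryOut {P F : Type} (Q : Query P F) : List (Trm F) := Q.flatMap Atom.out

/-- A clause `H ← B`. -/
structure Clause (P F : Type) where
  head : Atom P F
  body : Query P F

namespace Clause
variable {P F : Type}

def subst (σ : Subst F) (c : Clause P F) : Clause P F :=
  ⟨c.head.subst σ, c.body.map (Atom.subst σ)⟩

def vars (c : Clause P F) : Set ℕ := c.head.vars ∪ queryVars c.body

end Clause

/-- A variant of a clause: obtained by applying a renaming. -/
def IsVariantOf {P F : Type} (c c' : Clause P F) : Prop :=
  ∃ ρ : Subst F, Subst.IsRenaming ρ ∧ c' = c.subst ρ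

/-- A program: a finite set of clauses (represented as a list). -/
abbrev Program (P F : Type) := List (Clause P F)

/- ## Nicely- and simply-moded objects -/

/-- A query `p1(s1,t1),…,pn(sn,tn)` is nicely-moded if `t1,…,tn` is a linear
sequence of terms and for all `i`, `Var(si) ∩ ⋃_{j=i}^{n} Var(tj) = ∅`. -/
def NMQuery {P F : Type} (Q : Query P F) : Prop :=
  LinearList (queryOut Q) ∧
  ∀ (i : ℕ) (h : i < Q.length),
    varsList (Q.get ⟨i, h⟩).inp ∩ varsList (queryOut (Q.drop i)) = ∅

/-- A clause `p(s0,t0) ← Q` is nicely-moded if `Q` is nicely-moded and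
`Var(s0)` is disjoint from the output variables of `Q`. -/
def NMClause {P F : Type} (c : Clause P F) : Prop :=
  NMQuery c.body ∧ varsList c.head.inp ∩ varsList (queryOut c.body) = ∅

/-- A program is nicely-moded if all its clauses are. -/
def NMProgram {P F : Type} (Pgm : Program P F) : Prop := ∀ c ∈ Pgm, NMClause c

/-- A query is simply-moded if it is nicely-moded and its sequence of output
terms is a (linear) sequence of variables. -/
def SMQuery {P F : Type} (Q : Query P F) : Prop :=
  NMQuery Q ∧ ∀ t ∈ queryOut Q, ∃ x : ℕ, t = Trm.var x

/-- A clause is simply-moded if it is nicely-moded and its body is simply-moded. -/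
def SMClause {P F : Type} (c : Clause P F) : Prop :=
  NMClause c ∧ SMQuery c.body

/-- A program is simply-moded if all its clauses are. -/
def SMProgram {P F : Type} (Pgm : Program P F) : Prop := ∀ c ∈ Pgm, SMClause c

/- ## Input-consuming derivations -/

/-- `ICStepAt Q k c θ Q'` : the query `Q'` is obtained from `Q` by an
input-consuming derivation step resolving the atom at position `k` with the
(already renamed-apart) input clause `c`, via the relevant mgu `θ`. -/
def ICStepAt {P F : Type} (Q : Query P F) (k : ℕ) (c : Clause P F) (θ : Subst F)
    (Q' : Query P F) : Prop :=
  ∃ h : k < Q.length,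
    Atom.IsMgu θ (Q.get ⟨k, h⟩) c.head ∧
    Atom.RelevantFor θ (Q.get ⟨k, h⟩) c.head ∧
    substList θ (Q.get ⟨k, h⟩).inp = (Q.get ⟨k, h⟩).inp ∧
    Q' = (Q.take k ++ c.body ++ Q.drop (k + 1)).map (Atom.subst θ)

/-- A (possibly partial, possibly infinite) input-consuming derivation of length
`len` in program `Pgm`: queries `Q i`, selected atom positions `sel i`, input
clauses `cl i` (variants of program clauses) and relevant mgus `sub i`,
satisfying standardization apart. -/
structure ICDeriv {P F : Type} (Pgm : Program P F) (len : ℕ∞) where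
  Q : ℕ → Query P F
  sel : ℕ → ℕ
  cl : ℕ → Clause P F
  sub : ℕ → Subst F
  step : ∀ i : ℕ, (i : ℕ∞) < len → ICStepAt (Q i) (sel i) (cl i) (sub i) (Q (i + 1))
  fromProg : ∀ i : ℕ, (i : ℕ∞) < len → ∃ c ∈ Pgm, IsVariantOf c (cl i)
  standApart : ∀ i : ℕ, (i : ℕ∞) < len →
    Clause.vars (cl i) ∩
      (queryVars (Q 0) ∪ ⋃ j < i, (Clause.vars (cl j) ∪ Subst.vars (sub j))) = ∅

/-- The composition `θ1 θ2 ⋯ θn` of the first `n` step substitutions. -/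
def compRange {F : Type} (θ : ℕ → Subst F) : ℕ → Subst F
  | 0 => Subst.id
  | n + 1 => Subst.comp (compRange θ n) (θ n)

/-- There exists an infinite input-consuming derivation of `Pgm ∪ {Q0}`. -/
def InfICDeriv {P F : Type} (Pgm : Program P F) (Q0 : Query P F) : Prop :=
  ∃ d : ICDeriv Pgm ⊤, d.Q 0 = Q0

/-- A program is input terminating if all its input-consuming derivations
starting in a nicely-moded query are finite. -/
def InputTerminating {P F : Type} (Pgm : Program P F) : Prop :=
  ∀ Q : Query P F, NMQuery Q → ¬ InfICDeriv Pgm Q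

/- ## Dependency between predicate symbols -/

/-- `p` is defined in `Pgm` if `p` occurs in the head of one of its clauses. -/
def DefinedIn {P F : Type} (Pgm : Program P F) (p : P) : Prop :=
  ∃ c ∈ Pgm, c.head.rel = p

/-- `p` occurs in `Pgm` (in a head or in a body). -/
def OccursInProg {P F : Type} (Pgm : Program P F) (p : P) : Prop :=
  ∃ c ∈ Pgm, c.head.rel = p ∨ ∃ B ∈ c.body, B.rel = p

/-- `Pgm` extends `R` if no relation defined in `Pgm` occurs in `R`. -/
def ProgExtends {P F : Type} (Pgm R : Program P F) : Prop :=
  ∀ p : P, DefinedIn Pgm p → ¬ OccursInProg R p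

/-- `p` refers to `q` in `Pgm`. -/
def RefersTo {P F : Type} (Pgm : Program P F) (p q : P) : Prop :=
  ∃ c ∈ Pgm, c.head.rel = p ∧ ∃ B ∈ c.body, B.rel = q

/-- `p ⊒ q` : `p` depends on `q` (reflexive-transitive closure of refers-to). -/
def ProgDependsOn {P F : Type} (Pgm : Program P F) : P → P → Prop :=
  Relation.ReflTransGen (RefersTo Pgm)

/-- `p ≃ q` : `p` and `q` are mutually dependent. -/
def MutDep {P F : Type} (Pgm : Program P F) (p q : P) : Prop :=
  ProgDependsOn Pgm p q ∧ ProgDependsOn Pgm q p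

/-- `p ⊐ q` : `p ⊒ q` and not `p ≃ q`. -/
def SqSupset {P F : Type} (Pgm : Program P F) (p q : P) : Prop :=
  ProgDependsOn Pgm p q ∧ ¬ MutDep Pgm p q

/- ## Moded level mappings and quasi recurrency -/

/-- A moded level mapping: a function from atoms to naturals which does not
depend on the output terms (and is invariant under renaming, as it is a
function on the extended Herbrand base). -/
def ModedLevelMapping {P F : Type} (lvl : Atom P F → ℕ) : Prop :=
  (∀ (p : P) (s t u : List (Trm F)), lvl ⟨p, s, t⟩ = lvl ⟨p, s, u⟩) ∧
  (∀ (A : Atom P F) (ρ : Subst F), Subst.IsRenaming ρ → lvl (A.subst ρ) = lvl A)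

/-- A clause is quasi recurrent wrt `lvl` (in program `Pgm`) if for every
instance `H ← A,B,C` of it, if `Rel(H) ≃ Rel(B)` then `|H| > |B|`. -/
def QRClause {P F : Type} (Pgm : Program P F) (lvl : Atom P F → ℕ) (c : Clause P F) : Prop :=
  ∀ θ : Subst F, ∀ B ∈ c.body, MutDep Pgm c.head.rel B.rel →
    lvl (B.subst θ) < lvl (c.head.subst θ)

/-- A program is quasi recurrent wrt `lvl` if all its clauses are. -/
def QuasiRecurrentWrt {P F : Type} (Pgm : Program P F) (lvl : Atom P F → ℕ) : Prop :=
  ∀ c ∈ Pgm, QRClause Pgm lvl c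

/-- A program is quasi recurrent if it is quasi recurrent wrt some moded level mapping. -/
def QuasiRecurrent {P F : Type} (Pgm : Program P F) : Prop :=
  ∃ lvl : Atom P F → ℕ, ModedLevelMapping lvl ∧ QuasiRecurrentWrt Pgm lvl
/- ## IC-trees -/

/-- `Q'` is a resolvent of `Q` and (a renamed-apart variant of) the clause `c`
with respect to the atom at position `k`, via an input-consuming step. -/
def ICResolventOf {P F : Type} (Q : Query P F) (k : ℕ) (c : Clause P F)
    (Q' : Query P F) : Prop :=
  ∃ (c' : Clause P F) (θ : Subst F),
    IsVariantOf c c' ∧ Clause.vars c' ∩ queryVars Q = ∅ ∧ ICStepAt Q k c' θ Q'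

/-- The atom at position `k` of `Q` is input-consuming resolvable wrt clause `c`. -/
def ICResolvable {P F : Type} (Q : Query P F) (k : ℕ) (c : Clause P F) : Prop :=
  ∃ Q' : Query P F, ICResolventOf Q k c Q'

/-- An IC-tree for `Pgm ∪ {Q0}`, represented by the set `T` of its paths from
the root (a node of the tree is identified with the path reaching it):
its branches are input-consuming derivations of `Pgm ∪ {Q0}`, and every node
has exactly one descendant for every atom of its query and every program
clause wrt which that atom is input-consuming resolvable, this descendant
being a resolvent. -/
structure IsICTree {P F : Type} (Pgm : Program P F) (Q0 : Query P F)
    (T : Set (List (Query P F))) : Prop where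
  root : [Q0] ∈ T
  starts : ∀ l ∈ T, ∃ l' : List (Query P F), l = Q0 :: l'
  prefixClosed : ∀ (l : List (Query P F)) (Qn : Query P F), l ++ [Qn] ∈ T → l ≠ [] → l ∈ T
  children : ∀ l ∈ T, ∀ (k : ℕ) (c : Clause P F), c ∈ Pgm →
    ICResolvable (l.getLastD []) k c →
    ∃! Q' : Query P F, l ++ [Q'] ∈ T ∧ ICResolventOf (l.getLastD []) k c Q'
  childrenOnly : ∀ (l : List (Query P F)) (Q' : Query P F), l ++ [Q'] ∈ T → l ≠ [] →
    ∃ (k : ℕ) (c : Clause P F), c ∈ Pgm ∧ ICResolventOf (l.getLastD []) k c Q'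
  branches : ∀ l ∈ T, ∃ d : ICDeriv Pgm ((l.length - 1 : ℕ) : ℕ∞),
    ∀ i < l.length, d.Q i = l.getD i []

/- ## Input-recursive programs -/

/-- A clause `H ← A,B,C` is input-recursive (in `Pgm`) if whenever
`Rel(H) ≃ Rel(B)` then `Var(In(B)) ⊆ Var(In(H))`. -/
def InputRecursiveClause {P F : Type} (Pgm : Program P F) (c : Clause P F) : Prop :=
  ∀ B ∈ c.body, MutDep Pgm c.head.rel B.rel → varsList B.inp ⊆ varsList c.head.inp

/-- A program is input-recursive if all its clauses are. -/
def InputRecursive {P F : Type} (Pgm : Program P F) : Prop :=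
  ∀ c ∈ Pgm, InputRecursiveClause Pgm c
/- ## Auxiliary infrastructure -/
section Aux
variable {P F : Type}

theorem Trm.ind' {motive : Trm F → Prop} (hv : ∀ x, motive (.var x))
    (hf : ∀ f ts, (∀ t ∈ ts, motive t) → motive (.fn f ts)) : ∀ t, motive t
  | .var x => hv x
  | .fn f ts => hf f ts (fun t ht => Trm.ind' hv hf t)
decreasing_by have := List.sizeOf_lt_of_mem ht; simp; omega

@[simp] theorem Trm.subst_var (σ : Subst F) (x : ℕ) : (Trm.var x).subst σ = σ x := by
  simp [Trm.subst]

@[simp] theorem Trm.subst_fn (σ : Subst F) (f : F) (ts : List (Trm F)) :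
    (Trm.fn f ts).subst σ = .fn f (ts.map (·.subst σ)) := by
  rw [Trm.subst]; congr 1; simp [List.attach_map_val]

@[simp] theorem Trm.vars_var (x : ℕ) : (Trm.var x : Trm F).vars = {x} := by
  simp [Trm.vars]

theorem mem_foldr_union {x : ℕ} {l : List (Set ℕ)} :
    x ∈ l.foldr (· ∪ ·) ∅ ↔ ∃ s ∈ l, x ∈ s := by
  induction l <;> simp_all

theorem Trm.mem_vars_fn {x : ℕ} {f : F} {ts : List (Trm F)} :
    x ∈ (Trm.fn f ts).vars ↔ ∃ t ∈ ts, x ∈ t.vars := by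
  rw [Trm.vars, mem_foldr_union]; simp
end Aux
section Aux2
variable {P F : Type}

theorem Trm.mem_vars_subst {σ : Subst F} {x : ℕ} : ∀ {t : Trm F},
    (x ∈ (t.subst σ).vars ↔ ∃ y ∈ t.vars, x ∈ (σ y).vars) := by
  intro t
  induction t using Trm.ind' with
  | hv y => simp
  | hf f ts ih =>
    simp only [Trm.subst_fn, Trm.mem_vars_fn, List.mem_map]
    constructor
    · rintro ⟨-, ⟨u, hu, rfl⟩, hx⟩
      obtain ⟨y, hy, hxy⟩ := (ih u hu).mp hx
      exact ⟨y, ⟨u, hu, hy⟩, hxy⟩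
    · rintro ⟨y, hy, hxy⟩
      obtain ⟨u, hu, hyu⟩ := hy
      exact ⟨_, ⟨u, hu, rfl⟩, (ih u hu).mpr ⟨y, hyu, hxy⟩⟩

theorem Trm.subst_congr {σ τ : Subst F} : ∀ {t : Trm F},
    (∀ x ∈ t.vars, σ x = τ x) → t.subst σ = t.subst τ := by
  intro t
  induction t using Trm.ind' with
  | hv y => intro h; simpa using h y (by simp)
  | hf f ts ih =>
    intro h
    simp only [Trm.subst_fn, Trm.fn.injEq, true_and]
    exact List.map_congr_left fun u hu =>
      ih u hu fun x hx => h x (Trm.mem_vars_fn.mpr ⟨u, hu, hx⟩)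

theorem map_eq_self_forall {α : Type*} {f : α → α} : ∀ {l : List α},
    l.map f = l → ∀ a ∈ l, f a = a := by
  intro l
  induction l with
  | nil => simp
  | cons b l ih =>
    intro h a ha
    simp only [List.map_cons, List.cons.injEq] at h
    rcases List.mem_cons.mp ha with rfl | ha
    · exact h.1
    · exact ih h.2 a ha

theorem Trm.subst_fix {σ : Subst F} : ∀ {t : Trm F},
    t.subst σ = t → ∀ x ∈ t.vars, σ x = .var x := by
  intro t
  induction t using Trm.ind' with
  | hv y => intro h x hx; simp at h hx; rwa [hx]
  | hf f ts ih =>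
    intro h x hx
    simp only [Trm.subst_fn, Trm.fn.injEq, true_and] at h
    obtain ⟨u, hu, hxu⟩ := Trm.mem_vars_fn.mp hx
    exact ih u hu (map_eq_self_forall h u hu) x hxu

theorem Trm.subst_eq_var {σ : Subst F} {t : Trm F} {y : ℕ}
    (h : t.subst σ = .var y) : ∃ x, t = .var x ∧ σ x = .var y := by
  cases t with
  | var x => exact ⟨x, rfl, by simpa using h⟩
  | fn f ts => simp at h

end Aux2
section Aux3
variable {P F : Type}

theorem mem_varsList {x : ℕ} {l : List (Trm F)} :
    x ∈ varsList l ↔ ∃ t ∈ l, x ∈ t.vars := by simp [varsList]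

theorem varsList_append (l1 l2 : List (Trm F)) :
    varsList (l1 ++ l2) = varsList l1 ∪ varsList l2 := by
  ext x; simp only [Set.mem_union, mem_varsList, List.mem_append]; constructor
  · rintro ⟨t, (h|h), hx⟩
    exacts [Or.inl ⟨t, h, hx⟩, Or.inr ⟨t, h, hx⟩]
  · rintro (⟨t, h, hx⟩|⟨t, h, hx⟩)
    exacts [⟨t, Or.inl h, hx⟩, ⟨t, Or.inr h, hx⟩]

theorem mem_varsList_substList {σ : Subst F} {x : ℕ} {l : List (Trm F)} :
    x ∈ varsList (substList σ l) ↔ ∃ y ∈ varsList l, x ∈ (σ y).vars := by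
  simp only [mem_varsList, substList, List.mem_map]
  constructor
  · rintro ⟨-, ⟨t, ht, rfl⟩, hx⟩
    obtain ⟨y, hy, h2⟩ := Trm.mem_vars_subst.mp hx
    exact ⟨y, ⟨t, ht, hy⟩, h2⟩
  · rintro ⟨y, ⟨t, ht, hy⟩, h2⟩
    exact ⟨_, ⟨t, ht, rfl⟩, Trm.mem_vars_subst.mpr ⟨y, hy, h2⟩⟩

theorem substList_append (σ : Subst F) (l1 l2 : List (Trm F)) :
    substList σ (l1 ++ l2) = substList σ l1 ++ substList σ l2 := by
  simp [substList]

theorem substList_congr {σ τ : Subst F} {l : List (Trm F)}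
    (h : ∀ x ∈ varsList l, σ x = τ x) : substList σ l = substList τ l := by
  refine List.map_congr_left fun t ht => Trm.subst_congr fun x hx => h x ?_
  exact mem_varsList.mpr ⟨t, ht, hx⟩

theorem substList_fix {σ : Subst F} {l : List (Trm F)}
    (h : substList σ l = l) : ∀ x ∈ varsList l, σ x = .var x := by
  intro x hx
  obtain ⟨t, ht, hxt⟩ := mem_varsList.mp hx
  exact Trm.subst_fix (map_eq_self_forall h t ht) x hxt

theorem queryOut_append (Q1 Q2 : Query P F) :
    queryOut (Q1 ++ Q2) = queryOut Q1 ++ queryOut Q2 := by simp [queryOut]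

theorem queryOut_map_subst (σ : Subst F) (Q : Query P F) :
    queryOut (Q.map (Atom.subst σ)) = substList σ (queryOut Q) := by
  simp [queryOut, substList, List.flatMap_map, List.map_flatMap, Atom.subst]

theorem mem_queryVars {x : ℕ} {Q : Query P F} :
    x ∈ queryVars Q ↔ ∃ a ∈ Q, x ∈ a.vars := by simp [queryVars]

theorem out_subset_queryVars {Q : Query P F} : varsList (queryOut Q) ⊆ queryVars Q := by
  intro x hx
  obtain ⟨t, ht, hxt⟩ := mem_varsList.mp hx
  obtain ⟨a, ha, hta⟩ := List.mem_flatMap.mp ht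
  exact mem_queryVars.mpr ⟨a, ha, Or.inr (mem_varsList.mpr ⟨t, hta, hxt⟩)⟩

theorem inp_subset_queryVars {Q : Query P F} : varsList (queryInp Q) ⊆ queryVars Q := by
  intro x hx
  obtain ⟨t, ht, hxt⟩ := mem_varsList.mp hx
  obtain ⟨a, ha, hta⟩ := List.mem_flatMap.mp ht
  exact mem_queryVars.mpr ⟨a, ha, Or.inl (mem_varsList.mpr ⟨t, hta, hxt⟩)⟩

theorem inp_atom_subset {Q : Query P F} {a : Atom P F} (ha : a ∈ Q) :
    varsList a.inp ⊆ queryVars Q :=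
  fun x hx => mem_queryVars.mpr ⟨a, ha, Or.inl hx⟩

theorem out_atom_subset {Q : Query P F} {a : Atom P F} (ha : a ∈ Q) :
    varsList a.out ⊆ queryVars Q :=
  fun x hx => mem_queryVars.mpr ⟨a, ha, Or.inr hx⟩

/-- Splitting form of the nicely-modedness condition. -/
theorem nm_split {Q : Query P F} (h : NMQuery Q) {Q1 Q2 : Query P F} {a : Atom P F}
    (hq : Q = Q1 ++ a :: Q2) :
    varsList a.inp ∩ varsList (queryOut (a :: Q2)) = ∅ := by
  have hlen : Q1.length < Q.length := by subst hq; simp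
  have hdrop : Q.drop Q1.length = a :: Q2 := by rw [hq, List.drop_left]
  have hget : Q.get ⟨Q1.length, hlen⟩ = a := by
    have h2 := List.drop_eq_getElem_cons hlen
    rw [hdrop] at h2
    rw [List.cons.injEq] at h2
    simpa [List.get_eq_getElem] using h2.1.symm
  have := h.2 Q1.length hlen
  rwa [hget, hdrop] at this

theorem nm_of_split {Q : Query P F} (hlin : LinearList (queryOut Q))
    (h : ∀ (Q1 Q2 : Query P F) (a : Atom P F), Q = Q1 ++ a :: Q2 →
      varsList a.inp ∩ varsList (queryOut (a :: Q2)) = ∅) : NMQuery Q := by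
  refine ⟨hlin, fun i hi => ?_⟩
  have hdrop := List.drop_eq_getElem_cons hi
  have hq : Q = Q.take i ++ Q[i] :: Q.drop (i + 1) := by
    conv_lhs => rw [← List.take_append_drop i Q, hdrop]
  have := h (Q.take i) (Q.drop (i + 1)) Q[i] hq
  rw [List.get_eq_getElem, hdrop]
  exact this

theorem split2 {α : Type*} {X Y L1 L2 : List α} {x : α} (h : X ++ Y = L1 ++ x :: L2) :
    (∃ X2, X = L1 ++ x :: X2 ∧ L2 = X2 ++ Y) ∨ (∃ Y1, L1 = X ++ Y1 ∧ Y = Y1 ++ x :: L2) := by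
  rcases List.append_eq_append_iff.mp h with ⟨a', h1, h2⟩ | ⟨c', h1, h2⟩
  · exact Or.inr ⟨a', h1, h2⟩
  · cases c' with
    | nil =>
      simp only [List.append_nil] at h1
      simp only [List.nil_append] at h2
      exact Or.inr ⟨[], by simp [h1], by simp [h2]⟩
    | cons u c' =>
      simp only [List.cons_append, List.cons.injEq] at h2
      obtain ⟨rfl, rfl⟩ := h2
      exact Or.inl ⟨c', h1, rfl⟩

end Aux3
section Aux4
variable {P F : Type}

theorem Trm.subst_id : ∀ t : Trm F, t.subst Trm.var = t := by
  intro t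
  induction t using Trm.ind' with
  | hv x => simp
  | hf f ts ih =>
    rw [Trm.subst_fn]
    congr 1
    calc ts.map (·.subst Trm.var) = ts.map id := List.map_congr_left fun t ht => ih t ht
    _ = ts := List.map_id ts

theorem substList_id (l : List (Trm F)) : substList Trm.var l = l := by
  simp only [substList]
  induction l with
  | nil => rfl
  | cons a l ih => simp [Trm.subst_id, ih]

theorem varsList_map_var (ys : List ℕ) {x : ℕ} :
    x ∈ varsList (F := F) (ys.map Trm.var) ↔ x ∈ ys := by
  simp [mem_varsList]

theorem Trm.varCount_var (x y : ℕ) :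
    Trm.varCount x (Trm.var y : Trm F) = if y = x then 1 else 0 := by
  simp [Trm.varCount]

theorem varCountList_map_var (x : ℕ) (ys : List ℕ) :
    varCountList (F := F) x (ys.map Trm.var) = ys.count x := by
  induction ys with
  | nil => rfl
  | cons y ys ih =>
    simp only [List.map_cons, varCountList, List.sum_cons, Trm.varCount_var] at *
    rw [ih, List.count_cons]
    by_cases h : y = x <;> simp [h, beq_iff_eq] <;> omega

theorem linearList_map_var {ys : List ℕ} :
    LinearList (F := F) (ys.map Trm.var) ↔ ys.Nodup := by
  rw [List.nodup_iff_count_le_one]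
  simp [LinearList, varCountList_map_var]

/-- head variable of a term. -/
def vhd : Trm F → ℕ
  | .var x => x
  | .fn _ _ => 0

theorem list_of_vars {l : List (Trm F)} (h : ∀ t ∈ l, ∃ x, t = Trm.var x) :
    l = (l.map vhd).map Trm.var := by
  induction l with
  | nil => rfl
  | cons a l ih =>
    obtain ⟨x, rfl⟩ := h a (by simp)
    simp only [List.map_cons, vhd, List.cons.injEq, true_and]
    exact ih fun t ht => h t (by simp [ht])

theorem map_split {α β : Type*} {f : α → β} {L : List α} {R1 R2 : List β} {b : β}
    (h : L.map f = R1 ++ b :: R2) :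
    ∃ L1 x L2, L = L1 ++ x :: L2 ∧ R1 = L1.map f ∧ b = f x ∧ R2 = L2.map f := by
  obtain ⟨l1, l2, rfl, h1, h2⟩ := List.map_eq_append_iff.mp h
  obtain ⟨a, l2', rfl, ha, hl2⟩ := List.map_eq_cons_iff.mp h2
  exact ⟨l1, a, l2', rfl, h1.symm, ha.symm, hl2.symm⟩

theorem split3 {α : Type*} {X Y Z L1 L2 : List α} {x : α}
    (h : X ++ Y ++ Z = L1 ++ x :: L2) :
    (∃ X2, X = L1 ++ x :: X2 ∧ L2 = X2 ++ Y ++ Z) ∨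
    (∃ Y1 Y2, Y = Y1 ++ x :: Y2 ∧ L2 = Y2 ++ Z) ∨
    (∃ Z1, Z = Z1 ++ x :: L2) := by
  rw [List.append_assoc] at h
  rcases split2 h with ⟨X2, h1, h2⟩ | ⟨Y1, h1, h2⟩
  · exact Or.inl ⟨X2, h1, by rw [h2, List.append_assoc]⟩
  · rcases split2 h2 with ⟨Y2, h3, h4⟩ | ⟨Z1, h3, h4⟩
    · exact Or.inr (Or.inl ⟨Y1, Y2, h3, h4⟩)
    · exact Or.inr (Or.inr ⟨Z1, h4⟩)

end Aux4
section KeyA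
variable {P F : Type}

/-- Key lemma: an input-consuming mgu of `B` and `c.head` acts as an injective
variable renaming outside `Var(In(c.head)) ∪ Var(Out(B))`. -/
theorem mgu_renaming (A C : Query P F) (B : Atom P F) (c : Clause P F) (θ : Subst F)
    (hQ : SMQuery (A ++ B :: C)) (hc : SMClause c)
    (hdisj : queryVars (A ++ B :: C) ∩ Clause.vars c = ∅)
    (hmgu : Atom.IsMgu θ B c.head)
    (hic : substList θ B.inp = B.inp) :
    ∃ φ : ℕ → ℕ,
      (∀ x, x ∉ varsList c.head.inp → x ∉ varsList B.out → θ x = .var (φ x)) ∧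
      (∀ x y, x ∉ varsList c.head.inp → x ∉ varsList B.out →
              y ∉ varsList c.head.inp → y ∉ varsList B.out → φ x = φ y → x = y) := by
  classical
  obtain ⟨huni, hmost⟩ := hmgu
  have huni' : B.subst θ = c.head.subst θ := huni
  have hrel : B.rel = c.head.rel := by
    have := congrArg Atom.rel huni'; simpa [Atom.subst] using this
  have hinp : substList θ B.inp = substList θ c.head.inp := by
    have := congrArg Atom.inp huni'; simpa [Atom.subst] using this
  have hout : substList θ B.out = substList θ c.head.out := by
    have := congrArg Atom.out huni'; simpa [Atom.subst] using this
  have hs0θ : substList θ c.head.inp = B.inp := by rw [← hinp, hic]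
  have hDJ : ∀ x, x ∈ queryVars (A ++ B :: C) → x ∈ Clause.vars c → False := by
    intro x h1 h2
    exact Set.eq_empty_iff_forall_notMem.mp hdisj x ⟨h1, h2⟩
  -- `B.out` is a list of distinct variables `ys`
  set ys : List ℕ := B.out.map vhd with hysdef
  have hBQ : B ∈ A ++ B :: C := by simp
  have hys : B.out = ys.map Trm.var := by
    refine list_of_vars fun t ht => hQ.2 t ?_
    rw [queryOut_append]
    exact List.mem_append_right _ (List.mem_append_left _ ht)
  have hmemys : ∀ x, x ∈ varsList B.out ↔ x ∈ ys := by
    intro x; rw [hys]; exact varsList_map_var ys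
  have hysnd : ys.Nodup := by
    have hlin : LinearList (queryOut (A ++ B :: C)) := hQ.1.1
    have : ∀ x, varCountList x B.out ≤ varCountList x (queryOut (A ++ B :: C)) := by
      intro x
      rw [queryOut_append, show queryOut (B :: C) = B.out ++ queryOut C from rfl]
      simp only [varCountList, List.map_append, List.sum_append]
      omega
    rw [List.nodup_iff_count_le_one]
    intro x
    have h1 := le_trans (this x) (hlin x)
    rwa [hys, varCountList_map_var] at h1
  have hlen : ys.length = c.head.out.length := by
    have h1 := congrArg List.length hout
    simp only [substList, List.length_map] at h1
    rw [hysdef, List.length_map, h1]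
  -- variables of `B` (resp. the head of `c`) are not variables of `c` (resp. `Q`)
  have hysQ : ∀ x ∈ ys, x ∈ queryVars (A ++ B :: C) := fun x hx =>
    out_atom_subset hBQ ((hmemys x).mpr hx)
  have hs0c : ∀ x ∈ varsList c.head.inp, x ∈ Clause.vars c := fun x hx =>
    Or.inl (Or.inl hx)
  have ht0c : ∀ x ∈ varsList c.head.out, x ∈ Clause.vars c := fun x hx =>
    Or.inl (Or.inr hx)
  -- `Var(In(B))` is disjoint from `Var(Out(B))`
  have hBsplit := nm_split hQ.1 (rfl : A ++ B :: C = A ++ B :: C)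
  have hsnott : ∀ x ∈ varsList B.inp, x ∉ ys := by
    intro x hx hxy
    refine Set.eq_empty_iff_forall_notMem.mp hBsplit x ⟨hx, ?_⟩
    rw [show queryOut (B :: C) = B.out ++ queryOut C from rfl, varsList_append]
    exact Or.inl ((hmemys x).mpr hxy)
  -- the explicit relevant unifier η
  set τ : Subst F := fun x => if x ∈ varsList c.head.inp then θ x else .var x with hτ
  set η : Subst F := fun x =>
    if x ∈ varsList c.head.inp then θ x
    else if x ∈ ys then (c.head.out.getD (ys.idxOf x) (.var 0)).subst τ
    else .var x with hη
  have hηs0 : ∀ x ∈ varsList c.head.inp, η x = θ x := by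
    intro x hx; simp [hη, hx]
  have hηout : ∀ x, x ∉ varsList c.head.inp → x ∉ ys → η x = .var x := by
    intro x h1 h2; simp [hη, h1, h2]
  have u1 : substList η B.inp = B.inp := by
    rw [show B.inp = substList Trm.var B.inp from (substList_id _).symm]
    conv_lhs => rw [substList_id]
    refine substList_congr fun x hx => ?_
    have h1 : x ∉ varsList c.head.inp := fun hx0 =>
      hDJ x (inp_atom_subset hBQ hx) (hs0c x hx0)
    exact hηout x h1 (hsnott x hx)
  have u2 : substList η c.head.inp = B.inp := by
    rw [show substList η c.head.inp = substList τ c.head.inp from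
      substList_congr fun x hx => by simp [hη, hτ, hx]]
    rw [show substList τ c.head.inp = substList θ c.head.inp from
      substList_congr fun x hx => by simp [hτ, hx]]
    exact hs0θ
  have u4 : substList η c.head.out = substList τ c.head.out := by
    refine substList_congr fun x hx => ?_
    by_cases h1 : x ∈ varsList c.head.inp
    · simp [hη, hτ, h1]
    · have h2 : x ∉ ys := fun h2 => hDJ x (hysQ x h2) (ht0c x hx)
      simp [hη, hτ, h1, h2]
  have u3 : substList η B.out = substList τ c.head.out := by
    rw [hys]
    apply List.ext_getElem
    · simp [substList, hlen]
    · intro i hi1 hi2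
      simp only [substList, List.getElem_map] at hi1 hi2 ⊢
      have hiys : i < ys.length := by simpa using hi1
      have hyi : ys[i] ∈ ys := List.getElem_mem _
      have h1 : ys[i] ∉ varsList c.head.inp := fun h =>
        hDJ ys[i] (hysQ _ hyi) (hs0c _ h)
      have hidx : ys.idxOf ys[i] = i := List.Nodup.idxOf_getElem hysnd i hiys
      simp only [Trm.subst_var, hη, h1, if_false, hyi, if_true, hidx]
      congr 1
      exact List.getD_eq_getElem _ _ (by simpa [hlen] using hiys)
  have ηuni : Atom.IsUnifier η B c.head := by
    show Atom.subst η B = Atom.subst η c.head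
    simp only [Atom.subst]
    rw [u1, u2, u3, u4, hrel]
  obtain ⟨γ, hγ⟩ := hmost η ηuni
  have hγ' : ∀ x, (θ x).subst γ = η x := fun x => congrFun hγ x
  have key : ∀ x, x ∉ varsList c.head.inp → x ∉ varsList B.out →
      θ x = .var (vhd (θ x)) ∧ γ (vhd (θ x)) = .var x := by
    intro x h1 h2
    have h3 : (θ x).subst γ = .var x := by
      rw [hγ', hηout x h1 (fun h => h2 ((hmemys x).mpr h))]
    obtain ⟨u, hu, hgu⟩ := Trm.subst_eq_var h3
    rw [hu]
    exact ⟨rfl, hgu⟩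
  refine ⟨fun x => vhd (θ x), fun x h1 h2 => (key x h1 h2).1, ?_⟩
  intro x y h1 h2 h3 h4 hxy
  have k1 := (key x h1 h2).2
  have k2 := (key y h3 h4).2
  have hxy' : vhd (θ x) = vhd (θ y) := hxy
  rw [hxy', k2] at k1
  exact (Trm.var.injEq _ _ ▸ k1).symm

end KeyA

/-- Every resolvent of a simply-moded query `Q = A,B,C`
(selected atom `B`) and a simply-moded clause `c`, where the derivation step
is input-consuming and `Var(Q) ∩ Var(c) = ∅`, is simply-moded. -/
theorem stmt15 {P F : Type} (A C : Query P F) (B : Atom P F) (c : Clause P F)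
    (θ : Subst F)
    (hQ : SMQuery (A ++ B :: C)) (hc : SMClause c)
    (hdisj : queryVars (A ++ B :: C) ∩ Clause.vars c = ∅)
    (hmgu : Atom.IsMgu θ B c.head)
    (hic : substList θ B.inp = B.inp) :
    SMQuery ((A ++ c.body ++ C).map (Atom.subst θ)) := by
  classical
  obtain ⟨φ, hφ, hφinj⟩ := mgu_renaming A C B c θ hQ hc hdisj hmgu hic
  have hDJ : ∀ x, x ∈ queryVars (A ++ B :: C) → x ∈ Clause.vars c → False := by
    intro x h1 h2
    exact Set.eq_empty_iff_forall_notMem.mp hdisj x ⟨h1, h2⟩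
  have huni' : B.subst θ = c.head.subst θ := hmgu.1
  have hout : substList θ B.out = substList θ c.head.out := by
    have := congrArg Atom.out huni'; simpa [Atom.subst] using this
  have hs0θ : substList θ c.head.inp = B.inp := by
    have h1 : substList θ B.inp = substList θ c.head.inp := by
      have := congrArg Atom.inp huni'; simpa [Atom.subst] using this
    rw [← h1, hic]
  have hfixs : ∀ v ∈ varsList B.inp, θ v = .var v := substList_fix hic
  have hBQ : B ∈ A ++ B :: C := by simp
  have hBsplit := nm_split hQ.1 (rfl : A ++ B :: C = A ++ B :: C)
  have houtBC : queryOut (B :: C) = B.out ++ queryOut C := rfl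
  -- the output variable lists
  set ysA : List ℕ := (queryOut A).map vhd with hysA
  set ysB : List ℕ := B.out.map vhd with hysB
  set ysC : List ℕ := (queryOut C).map vhd with hysC
  set ysD : List ℕ := (queryOut c.body).map vhd with hysD
  have hAeq : queryOut A = ysA.map Trm.var := by
    refine list_of_vars fun t ht => hQ.2 t ?_
    rw [queryOut_append]; exact List.mem_append_left _ ht
  have hBeq : B.out = ysB.map Trm.var := by
    refine list_of_vars fun t ht => hQ.2 t ?_
    rw [queryOut_append, houtBC]
    exact List.mem_append_right _ (List.mem_append_left _ ht)
  have hCeq : queryOut C = ysC.map Trm.var := by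
    refine list_of_vars fun t ht => hQ.2 t ?_
    rw [queryOut_append, houtBC]
    exact List.mem_append_right _ (List.mem_append_right _ ht)
  have hDeq : queryOut c.body = ysD.map Trm.var := by
    exact list_of_vars fun t ht => hc.2.2 t ht
  have hmemA : ∀ x, x ∈ varsList (queryOut A) ↔ x ∈ ysA := by
    intro x; rw [hAeq]; exact varsList_map_var ysA
  have hmemB : ∀ x, x ∈ varsList B.out ↔ x ∈ ysB := by
    intro x; rw [hBeq]; exact varsList_map_var ysB
  have hmemC : ∀ x, x ∈ varsList (queryOut C) ↔ x ∈ ysC := by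
    intro x; rw [hCeq]; exact varsList_map_var ysC
  have hmemD : ∀ x, x ∈ varsList (queryOut c.body) ↔ x ∈ ysD := by
    intro x; rw [hDeq]; exact varsList_map_var ysD
  -- nodup facts
  have hnodQ : (ysA ++ ysB ++ ysC).Nodup := by
    apply linearList_map_var.mp
    have h1 : queryOut (A ++ B :: C) = (ysA ++ ysB ++ ysC).map Trm.var := by
      rw [queryOut_append, houtBC, hAeq, hBeq, hCeq]; simp
    rw [← h1]; exact hQ.1.1
  have hnodD : ysD.Nodup := by
    apply linearList_map_var.mp
    rw [← hDeq]; exact hc.2.1.1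
  rw [List.nodup_append] at hnodQ
  obtain ⟨hnodAB, hnodC, hdjABC⟩ := hnodQ
  rw [List.nodup_append] at hnodAB
  obtain ⟨hnodA, hnodB, hdjAB⟩ := hnodAB
  -- memberships in query/clause variables
  have hQA : ∀ u ∈ ysA, u ∈ queryVars (A ++ B :: C) := by
    intro u hu
    apply out_subset_queryVars
    rw [queryOut_append]
    exact ((varsList_append _ _).symm ▸ Or.inl ((hmemA u).mpr hu) :
      u ∈ varsList (queryOut A ++ queryOut (B :: C)))
  have hQB : ∀ u ∈ varsList B.out, u ∈ queryVars (A ++ B :: C) := fun u hu =>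
    out_atom_subset hBQ hu
  have hQC : ∀ u ∈ ysC, u ∈ queryVars (A ++ B :: C) := by
    intro u hu
    apply out_subset_queryVars
    rw [queryOut_append, houtBC, varsList_append, varsList_append]
    exact Or.inr (Or.inr ((hmemC u).mpr hu))
  have hQinp : ∀ a ∈ A ++ B :: C, ∀ u ∈ varsList a.inp, u ∈ queryVars (A ++ B :: C) :=
    fun a ha u hu => inp_atom_subset ha hu
  have hcD : ∀ u ∈ ysD, u ∈ Clause.vars c := fun u hu =>
    Or.inr (out_subset_queryVars ((hmemD u).mpr hu))
  have hcinp : ∀ a ∈ c.body, ∀ u ∈ varsList a.inp, u ∈ Clause.vars c :=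
    fun a ha u hu => Or.inr (inp_atom_subset ha hu)
  have hcs0 : ∀ u ∈ varsList c.head.inp, u ∈ Clause.vars c := fun u hu => Or.inl (Or.inl hu)
  have hct0 : ∀ u ∈ varsList c.head.out, u ∈ Clause.vars c := fun u hu => Or.inl (Or.inr hu)
  -- output variables are "clean"
  have hOKA : ∀ w ∈ ysA, w ∉ varsList c.head.inp ∧ w ∉ varsList B.out := by
    intro w hw
    exact ⟨fun h => hDJ w (hQA w hw) (hcs0 w h),
           fun h => hdjAB w hw w ((hmemB w).mp h) rfl⟩
  have hOKC : ∀ w ∈ ysC, w ∉ varsList c.head.inp ∧ w ∉ varsList B.out := by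
    intro w hw
    refine ⟨fun h => hDJ w (hQC w hw) (hcs0 w h), fun h => ?_⟩
    exact hdjABC w (List.mem_append_right _ ((hmemB w).mp h)) w hw rfl
  have hOKD : ∀ w ∈ ysD, w ∉ varsList c.head.inp ∧ w ∉ varsList B.out := by
    intro w hw
    have h1 := Set.eq_empty_iff_forall_notMem.mp hc.1.2 w
    exact ⟨fun h => h1 ⟨h, (hmemD w).mpr hw⟩,
           fun h => hDJ w (hQB w h) (hcD w hw)⟩
  have hVsOK : ∀ v ∈ varsList B.inp, v ∉ varsList c.head.inp ∧ v ∉ varsList B.out := by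
    intro v hv
    refine ⟨fun h => hDJ v (hQinp B hBQ v hv) (hcs0 v h), fun h => ?_⟩
    refine Set.eq_empty_iff_forall_notMem.mp hBsplit v ⟨hv, ?_⟩
    rw [houtBC, varsList_append]
    exact Or.inl h
  have hφs : ∀ v ∈ varsList B.inp, φ v = v := by
    intro v hv
    have h1 := hφ v (hVsOK v hv).1 (hVsOK v hv).2
    rw [hfixs v hv] at h1
    exact (Trm.var.injEq _ _ ▸ h1).symm
  have hVs_notC : ∀ u ∈ ysC, u ∉ varsList B.inp := by
    intro u hu hv
    refine Set.eq_empty_iff_forall_notMem.mp hBsplit u ⟨hv, ?_⟩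
    rw [houtBC, varsList_append]
    exact Or.inr ((hmemC u).mpr hu)
  -- images of input/output variables of the head
  have hθs0 : ∀ z ∈ varsList c.head.inp, ∀ x ∈ (θ z).vars, x ∈ varsList B.inp := by
    intro z hz x hx
    have : x ∈ varsList (substList θ c.head.inp) := mem_varsList_substList.mpr ⟨z, hz, hx⟩
    rwa [hs0θ] at this
  have hθt : ∀ y ∈ varsList B.out, ∀ x ∈ (θ y).vars,
      x ∈ varsList B.inp ∨ ∃ z, z ∈ varsList c.head.out ∧ z ∉ varsList c.head.inp ∧
        z ∉ varsList B.out ∧ x = φ z := by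
    intro y hy x hx
    have h1 : x ∈ varsList (substList θ c.head.out) := by
      rw [← hout]; exact mem_varsList_substList.mpr ⟨y, hy, hx⟩
    obtain ⟨z, hz, hxz⟩ := mem_varsList_substList.mp h1
    by_cases h2 : z ∈ varsList c.head.inp
    · exact Or.inl (hθs0 z h2 x hxz)
    · have h3 : z ∉ varsList B.out := fun h => hDJ z (hQB z h) (hct0 z hz)
      rw [hφ z h2 h3] at hxz
      simp only [Trm.vars_var, Set.mem_singleton_iff] at hxz
      exact Or.inr ⟨z, hz, h2, h3, hxz⟩
  -- the three collision lemmas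
  have haux1 : ∀ p w v, p ∉ varsList c.head.inp → p ∉ varsList B.out →
      w ∉ varsList c.head.inp → w ∉ varsList B.out → p ≠ w →
      v ∈ (θ p).vars → v ∈ (θ w).vars → False := by
    intro p w v hp1 hp2 hw1 hw2 hne hv1 hv2
    rw [hφ p hp1 hp2] at hv1
    rw [hφ w hw1 hw2] at hv2
    simp only [Trm.vars_var, Set.mem_singleton_iff] at hv1 hv2
    exact hne (hφinj p w hp1 hp2 hw1 hw2 (hv1 ▸ hv2 ▸ rfl))
  have haux2 : ∀ p w v, p ∈ varsList c.head.inp →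
      w ∉ varsList c.head.inp → w ∉ varsList B.out → w ∉ varsList B.inp →
      v ∈ (θ p).vars → v ∈ (θ w).vars → False := by
    intro p w v hp hw1 hw2 hw3 hv1 hv2
    have hvVs : v ∈ varsList B.inp := hθs0 p hp v hv1
    rw [hφ w hw1 hw2] at hv2
    simp only [Trm.vars_var, Set.mem_singleton_iff] at hv2
    have : w = v := by
      refine hφinj w v hw1 hw2 (hVsOK v hvVs).1 (hVsOK v hvVs).2 ?_
      rw [hφs v hvVs, hv2]
    exact hw3 (this ▸ hvVs)
  have haux3 : ∀ p w v, p ∈ varsList B.out →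
      w ∉ varsList c.head.inp → w ∉ varsList B.out → w ∉ varsList B.inp →
      w ∈ queryVars (A ++ B :: C) →
      v ∈ (θ p).vars → v ∈ (θ w).vars → False := by
    intro p w v hp hw1 hw2 hw3 hwQ hv1 hv2
    rw [hφ w hw1 hw2] at hv2
    simp only [Trm.vars_var, Set.mem_singleton_iff] at hv2
    rcases hθt p hp v hv1 with hvVs | ⟨z, hz, hz1, hz2, hvz⟩
    · have : w = v := by
        refine hφinj w v hw1 hw2 (hVsOK v hvVs).1 (hVsOK v hvVs).2 ?_
        rw [hφs v hvVs, hv2]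
      exact hw3 (this ▸ hvVs)
    · have : w = z := hφinj w z hw1 hw2 hz1 hz2 (by rw [← hv2, hvz])
      exact hDJ w hwQ (this ▸ hct0 z hz)
  -- outputs of the resolvent
  have hOK3 : ∀ w ∈ ysA ++ ysD ++ ysC, w ∉ varsList c.head.inp ∧ w ∉ varsList B.out := by
    intro w hw
    rcases List.mem_append.mp hw with hw | hwC
    · rcases List.mem_append.mp hw with hwA | hwD
      exacts [hOKA w hwA, hOKD w hwD]
    · exact hOKC w hwC
  have hRout : queryOut ((A ++ c.body ++ C).map (Atom.subst θ)) =
      ((ysA ++ ysD ++ ysC).map φ).map Trm.var := by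
    rw [queryOut_map_subst, queryOut_append, queryOut_append, hAeq, hDeq, hCeq,
      ← List.map_append, ← List.map_append]
    simp only [substList, List.map_map]
    refine List.map_congr_left fun w hw => ?_
    simp only [Function.comp, Trm.subst_var]
    exact hφ w (hOK3 w hw).1 (hOK3 w hw).2
  have hnodADC : (ysA ++ ysD ++ ysC).Nodup := by
    rw [List.nodup_append, List.nodup_append]
    refine ⟨⟨hnodA, hnodD, fun u huA u' huD e => by subst e; exact hDJ u (hQA u huA) (hcD u huD)⟩, hnodC, ?_⟩
    intro u hu u' huC e
    subst e
    rcases List.mem_append.mp hu with huA | huD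
    · exact hdjABC u (List.mem_append_left _ huA) u huC rfl
    · exact hDJ u (hQC u huC) (hcD u huD)
  have hnodmap : ((ysA ++ ysD ++ ysC).map φ).Nodup := by
    refine List.Nodup.map_on ?_ hnodADC
    intro u hu u' hu' he
    exact hφinj u u' (hOK3 u hu).1 (hOK3 u hu).2 (hOK3 u' hu').1 (hOK3 u' hu').2 he
  constructor
  · refine nm_of_split (by rw [hRout]; exact linearList_map_var.mpr hnodmap) ?_
    intro R1 R2 a' hsplit
    obtain ⟨L1, x, L2, hL, hR1, ha', hR2⟩ := map_split hsplit
    subst ha'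
    subst hR2
    have hQout2 : queryOut (Atom.subst θ x :: L2.map (Atom.subst θ)) =
        substList θ (queryOut (x :: L2)) := by
      rw [show Atom.subst θ x :: L2.map (Atom.subst θ) = (x :: L2).map (Atom.subst θ)
        from rfl, queryOut_map_subst]
    rw [Set.eq_empty_iff_forall_notMem]
    rintro v ⟨hv1, hv2⟩
    have hv1' : v ∈ varsList (substList θ x.inp) := hv1
    obtain ⟨p, hp, hvp⟩ := mem_varsList_substList.mp hv1'
    rw [hQout2] at hv2
    obtain ⟨w, hw, hvw⟩ := mem_varsList_substList.mp hv2
    rcases split3 hL with ⟨X2, hA2, hL2⟩ | ⟨Y1, Y2, hD2, hL2⟩ | ⟨Z1, hC2⟩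
    · -- selected atom in A
      subst hL2
      have hxQ : x ∈ A ++ B :: C := by rw [hA2]; simp
      have hx := nm_split hQ.1 (show A ++ B :: C = L1 ++ x :: (X2 ++ B :: C) by
        rw [hA2]; simp)
      have hpQ : p ∈ queryVars (A ++ B :: C) := hQinp x hxQ p hp
      have hpVs0 : p ∉ varsList c.head.inp := fun h => hDJ p hpQ (hcs0 p h)
      have hpOut : p ∉ varsList (queryOut (x :: (X2 ++ B :: C))) := fun h =>
        Set.eq_empty_iff_forall_notMem.mp hx p ⟨hp, h⟩
      have e1 : ∀ u, u ∈ varsList (queryOut (x :: (X2 ++ B :: C))) ↔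
          (u ∈ varsList x.out ∨ u ∈ varsList (queryOut X2) ∨
           u ∈ varsList B.out ∨ u ∈ varsList (queryOut C)) := by
        intro u
        show u ∈ varsList (x.out ++ queryOut (X2 ++ B :: C)) ↔ _
        rw [queryOut_append, houtBC]
        simp only [varsList_append, Set.mem_union, or_assoc]
      simp only [e1, not_or] at hpOut
      obtain ⟨hp1, hp2, hp3, hp4⟩ := hpOut
      have e2 : ∀ u, u ∈ varsList (queryOut (x :: (X2 ++ c.body ++ C))) ↔
          (u ∈ varsList x.out ∨ u ∈ varsList (queryOut X2) ∨
           u ∈ varsList (queryOut c.body) ∨ u ∈ varsList (queryOut C)) := by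
        intro u
        show u ∈ varsList (x.out ++ queryOut (X2 ++ c.body ++ C)) ↔ _
        rw [queryOut_append, queryOut_append]
        simp only [varsList_append, Set.mem_union, or_assoc]
      rw [e2] at hw
      have hwA' : ∀ u, u ∈ varsList x.out ∨ u ∈ varsList (queryOut X2) → u ∈ ysA := by
        intro u hu
        rw [← hmemA, hA2, queryOut_append, varsList_append]
        refine Or.inr ?_
        show u ∈ varsList (x.out ++ queryOut X2)
        rw [varsList_append]
        exact hu
      rcases hw with hw | hw | hw | hw
      · have hwA := hwA' w (Or.inl hw)
        exact haux1 p w v hpVs0 hp3 (hOKA w hwA).1 (hOKA w hwA).2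
          (fun e => hp1 (e ▸ hw)) hvp hvw
      · have hwA := hwA' w (Or.inr hw)
        exact haux1 p w v hpVs0 hp3 (hOKA w hwA).1 (hOKA w hwA).2
          (fun e => hp2 (e ▸ hw)) hvp hvw
      · have hwD := (hmemD w).mp hw
        exact haux1 p w v hpVs0 hp3 (hOKD w hwD).1 (hOKD w hwD).2
          (fun e => hDJ p hpQ (e ▸ hcD w hwD)) hvp hvw
      · have hwC := (hmemC w).mp hw
        exact haux1 p w v hpVs0 hp3 (hOKC w hwC).1 (hOKC w hwC).2
          (fun e => hp4 (e ▸ hw)) hvp hvw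
    · -- selected atom in the body of c
      subst hL2
      have hxc : x ∈ c.body := by rw [hD2]; simp
      have hx := nm_split hc.2.1 hD2
      have hpc : p ∈ Clause.vars c := hcinp x hxc p hp
      have e2 : ∀ u, u ∈ varsList (queryOut (x :: (Y2 ++ C))) ↔
          (u ∈ varsList (queryOut (x :: Y2)) ∨ u ∈ varsList (queryOut C)) := by
        intro u
        show u ∈ varsList (x.out ++ queryOut (Y2 ++ C)) ↔ _
        rw [queryOut_append, show queryOut (x :: Y2) = x.out ++ queryOut Y2 from rfl]
        simp only [varsList_append, Set.mem_union, or_assoc]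
      rw [e2] at hw
      have hwD' : ∀ u, u ∈ varsList (queryOut (x :: Y2)) → u ∈ ysD := by
        intro u hu
        rw [← hmemD, hD2, queryOut_append, varsList_append]
        exact Or.inr hu
      by_cases hp0 : p ∈ varsList c.head.inp
      · rcases hw with hw | hw
        · have hwD := hwD' w hw
          exact haux2 p w v hp0 (hOKD w hwD).1 (hOKD w hwD).2
            (fun h => hDJ w (hQinp B hBQ w h) (hcD w hwD)) hvp hvw
        · have hwC := (hmemC w).mp hw
          exact haux2 p w v hp0 (hOKC w hwC).1 (hOKC w hwC).2
            (hVs_notC w hwC) hvp hvw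
      · have hpB : p ∉ varsList B.out := fun h => hDJ p (hQB p h) hpc
        rcases hw with hw | hw
        · have hwD := hwD' w hw
          exact haux1 p w v hp0 hpB (hOKD w hwD).1 (hOKD w hwD).2
            (fun e => Set.eq_empty_iff_forall_notMem.mp hx p ⟨hp, e ▸ hw⟩) hvp hvw
        · have hwC := (hmemC w).mp hw
          exact haux1 p w v hp0 hpB (hOKC w hwC).1 (hOKC w hwC).2
            (fun e => hDJ w (hQC w hwC) (e ▸ hpc)) hvp hvw
    · -- selected atom in C
      have hxQ : x ∈ A ++ B :: C := by rw [hC2]; simp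
      have hx := nm_split hQ.1 (show A ++ B :: C = (A ++ B :: Z1) ++ x :: L2 by
        rw [hC2]; simp)
      have hpQ : p ∈ queryVars (A ++ B :: C) := hQinp x hxQ p hp
      have hpVs0 : p ∉ varsList c.head.inp := fun h => hDJ p hpQ (hcs0 p h)
      have hpOut : p ∉ varsList (queryOut (x :: L2)) := fun h =>
        Set.eq_empty_iff_forall_notMem.mp hx p ⟨hp, h⟩
      have hwC : w ∈ ysC := by
        rw [← hmemC, hC2, queryOut_append, varsList_append]
        refine Or.inr ?_
        show w ∈ varsList (queryOut (x :: L2))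
        exact hw
      by_cases hpB : p ∈ varsList B.out
      · exact haux3 p w v hpB (hOKC w hwC).1 (hOKC w hwC).2 (hVs_notC w hwC)
          (hQC w hwC) hvp hvw
      · exact haux1 p w v hpVs0 hpB (hOKC w hwC).1 (hOKC w hwC).2
          (fun e => hpOut (e ▸ hw)) hvp hvw
  · intro t' ht'
    rw [hRout] at ht'
    obtain ⟨u, -, rfl⟩ := List.mem_map.mp ht'
    exact ⟨u, rfl⟩
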